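/- arXiv:0902.4175 — 6 statements merged into one kernel-verified Lean document; each statement's English description precedes it below -/
import Mathlib

section
/- Let a, F : ℝ → ℝ be continuous, G : ℝ → ℝ continuous, and let A be an antiderivative of a, H an antiderivative of x ↦ F(x)·exp(A(x)), and K an antiderivative of G. If y : ℝ → ℝ is twice differentiable and satisfies y'(x) = (H(x) + K(y(x)))·exp(−A(x)) for all x, then y satisfies y''(x) + a(x)·y'(x) = F(x) + y'(x)·G(y(x))·exp(−A(x)) for all x. -/
open Filter Topology Real

/-- Differentiating `y' = (H + K ∘ y)·e^{-A}` by the product rule, the term `(H + K ∘ y)·e^{-A}`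
reappears as `y'` and `e^{A}·e^{-A} = 1` cancels the integrating factor in `H' = F·e^{A}`. -/
theorem hasDerivAt_deriv_of_deriv_eventuallyEq {a F G A H K y : ℝ → ℝ} {x : ℝ}
    (hA : HasDerivAt A (a x) x) (hH : HasDerivAt H (F x * exp (A x)) x)
    (hK : HasDerivAt K (G (y x)) (y x)) (hy : DifferentiableAt ℝ y x)
    (heq : deriv y =ᶠ[𝓝 x] fun t => (H t + K (y t)) * exp (-A t)) :
    HasDerivAt (deriv y) (F x + deriv y x * G (y x) * exp (-A x) - a x * deriv y x) x := by
  have hyx : deriv y x = (H x + K (y x)) * exp (-A x) := heq.eq_of_nhds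
  have hrhs := (hH.add (hK.comp x hy.hasDerivAt)).mul hA.neg.exp
  refine (hrhs.congr_of_eventuallyEq heq).congr_deriv ?_
  have hexp : exp (A x) * exp (-A x) = 1 := by rw [← exp_add, add_neg_cancel, exp_zero]
  simp only [Pi.add_apply, Pi.neg_apply, Function.comp_apply]
  linear_combination F x * hexp + a x * hyx

theorem stmt_0_general (a F G A H K y : ℝ → ℝ)
    (hA : ∀ x, HasDerivAt A (a x) x)
    (hH : ∀ x, HasDerivAt H (F x * Real.exp (A x)) x)
    (hK : ∀ u, HasDerivAt K (G u) u)
    (hy : Differentiable ℝ y)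
    (heq : ∀ x, deriv y x = (H x + K (y x)) * Real.exp (-A x)) :
    ∀ x, deriv (deriv y) x + a x * deriv y x
      = F x + deriv y x * G (y x) * Real.exp (-A x) := by
  intro x
  have hy'' := hasDerivAt_deriv_of_deriv_eventuallyEq (hA x) (hH x) (hK (y x)) (hy x)
    (Eventually.of_forall heq)
  rw [hy''.deriv]
  ring

/-- First-class reduction: if `y' = (H(x) + K(y))·e^{-A(x)}` with `H' = F·e^A`, `K' = G`,
then `y'' + a(x)y' = F(x) + y'·G(y)·e^{-A(x)}`. -/
theorem stmt_0 (a F G A H K y : ℝ → ℝ)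
    (ha : Continuous a) (hF : Continuous F) (hG : Continuous G)
    (hA : ∀ x, HasDerivAt A (a x) x)
    (hH : ∀ x, HasDerivAt H (F x * Real.exp (A x)) x)
    (hK : ∀ u, HasDerivAt K (G u) u)
    (hy : Differentiable ℝ y) (hy' : Differentiable ℝ (deriv y))
    (heq : ∀ x, deriv y x = (H x + K (y x)) * Real.exp (-A x)) :
    ∀ x, deriv (deriv y) x + a x * deriv y x
      = F x + deriv y x * G (y x) * Real.exp (-A x) :=
  stmt_0_general a F G A H K y hA hH hK hy heq
end

section
/- Let a, G : ℝ → ℝ be continuous, F : ℝ → ℝ continuous, and let A be an antiderivative of a, H an antiderivative of F, and K an antiderivative of y ↦ G(y)·exp(A(y)). If y : ℝ → ℝ is twice differentiable and satisfies y'(x) = (H(x) + K(y(x)))·exp(−A(y(x))) for all x, then y satisfies y''(x) + a(y(x))·(y'(x))² = F(x)·exp(−A(y(x))) + y'(x)·G(y(x)) for all x. -/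
/-! Differentiate the first-order equation: the derivative of `(H + K ∘ y)·e^{-A ∘ y}` is
`F·e^{-A(y)} + y'·G(y) - a(y)·y'·(H + K(y))·e^{-A(y)}`, and the last factor is `y'` again. -/

open Real

theorem hasDerivAt_add_mul_exp_neg_comp {a F G A H K y : ℝ → ℝ} {x y' : ℝ}
    (hA : HasDerivAt A (a (y x)) (y x)) (hH : HasDerivAt H (F x) x)
    (hK : HasDerivAt K (G (y x) * exp (A (y x))) (y x)) (hy : HasDerivAt y y' x) :
    HasDerivAt (fun t => (H t + K (y t)) * exp (-A (y t)))
      (F x * exp (-A (y x)) + y' * G (y x)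
        - a (y x) * y' * ((H x + K (y x)) * exp (-A (y x)))) x := by
  have hprod := (hH.add (hK.comp x hy)).mul (hA.comp x hy).neg.exp
  refine hprod.congr_deriv ?_
  have hexp : exp (A (y x)) * exp (-A (y x)) = 1 := by rw [← exp_add, add_neg_cancel, exp_zero]
  simp only [Pi.add_apply, Function.comp_apply, Pi.neg_apply]
  linear_combination y' * G (y x) * hexp

theorem stmt_1_general (a F G A H K y : ℝ → ℝ)
    (hA : ∀ u, HasDerivAt A (a u) u)
    (hH : ∀ x, HasDerivAt H (F x) x)
    (hK : ∀ u, HasDerivAt K (G u * Real.exp (A u)) u)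
    (hy : Differentiable ℝ y)
    (heq : ∀ x, deriv y x = (H x + K (y x)) * Real.exp (-A (y x))) :
    ∀ x, deriv (deriv y) x + a (y x) * (deriv y x) ^ 2
      = F x * Real.exp (-A (y x)) + deriv y x * G (y x) := by
  intro x
  have hderiv : HasDerivAt (deriv y)
      (F x * exp (-A (y x)) + deriv y x * G (y x) - a (y x) * deriv y x * deriv y x) x := by
    have h := hasDerivAt_add_mul_exp_neg_comp (hA _) (hH x) (hK _) (hy x).hasDerivAt
    rwa [← heq x, ← funext heq] at h
  rw [hderiv.deriv]
  ring

/-- Second-class reduction: if `y' = (H(x) + K(y))·e^{-A(y)}` with `H' = F`,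
`K'(u) = G(u)·e^{A(u)}`, then `y'' + a(y)(y')² = F(x)·e^{-A(y)} + y'·G(y)`. -/
theorem stmt_1 (a F G A H K y : ℝ → ℝ)
    (ha : Continuous a) (hF : Continuous F) (hG : Continuous G)
    (hA : ∀ u, HasDerivAt A (a u) u)
    (hH : ∀ x, HasDerivAt H (F x) x)
    (hK : ∀ u, HasDerivAt K (G u * Real.exp (A u)) u)
    (hy : Differentiable ℝ y) (hy' : Differentiable ℝ (deriv y))
    (heq : ∀ x, deriv y x = (H x + K (y x)) * Real.exp (-A (y x))) :
    ∀ x, deriv (deriv y) x + a (y x) * (deriv y x) ^ 2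
      = F x * Real.exp (-A (y x)) + deriv y x * G (y x) :=
  stmt_1_general a F G A H K y hA hH hK hy heq
end

section
/- Let m be a natural number, a : ℝ → ℝ continuous with antiderivative A, and F : ℝ × ℝ → ℝ. Suppose K : ℝ → ℝ is differentiable and satisfies K(u)^{m+1}·K'(u) = F(u, K(u)) for all u. If y : ℝ → ℝ is twice differentiable and satisfies y'(x) = K(y(x))·exp(−A(x)) for all x, then y satisfies (y'(x))^m·y''(x) + a(x)·(y'(x))^{m+1} = exp(−(m+2)·A(x))·F(y(x), y'(x)·exp(A(x))) for all x. -/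
/-!
Differentiating `y' = K(y) e^{-A}` gives `y'' + a y' = K'(y) K(y) e^{-2A}`. Multiplying by
`(y')^m = K(y)^m e^{-mA}` yields `e^{-(m+2)A} K(y)^{m+1} K'(y) = e^{-(m+2)A} F(y, K(y))`, and
`K(y) = y' e^{A}`.
-/

open Real

theorem hasDerivAt_deriv_of_deriv_eq_mul_exp_neg {K y A : ℝ → ℝ} {a x : ℝ}
    (hK : DifferentiableAt ℝ K (y x)) (hy : DifferentiableAt ℝ y x) (hA : HasDerivAt A a x)
    (heq : deriv y = fun x => K (y x) * exp (-A x)) :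
    HasDerivAt (deriv y) (deriv K (y x) * deriv y x * exp (-A x) - a * deriv y x) x := by
  have hKy : HasDerivAt (fun x => K (y x)) (deriv K (y x) * deriv y x) x :=
    hK.hasDerivAt.comp x hy.hasDerivAt
  rw [heq]
  refine (hKy.mul hA.neg.exp).congr_deriv ?_
  rw [congrFun heq x, Pi.neg_apply]
  ring

theorem stmt_2_general (m : ℕ) (a A K y : ℝ → ℝ) (F : ℝ × ℝ → ℝ)
    (hA : ∀ x, HasDerivAt A (a x) x)
    (hKdiff : Differentiable ℝ K)
    (hKeq : ∀ u, K u ^ (m + 1) * deriv K u = F (u, K u))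
    (hy : Differentiable ℝ y)
    (heq : ∀ x, deriv y x = K (y x) * Real.exp (-A x)) :
    ∀ x, (deriv y x) ^ m * deriv (deriv y) x + a x * (deriv y x) ^ (m + 1)
      = Real.exp (-((m : ℝ) + 2) * A x) * F (y x, deriv y x * Real.exp (A x)) := by
  intro x
  have hy'' : deriv (deriv y) x = deriv K (y x) * deriv y x * exp (-A x) - a x * deriv y x :=
    (hasDerivAt_deriv_of_deriv_eq_mul_exp_neg (hKdiff _) (hy x) (hA x) (funext heq)).deriv
  have hK : deriv y x * exp (A x) = K (y x) := by
    rw [heq, mul_assoc, ← exp_add, neg_add_cancel, exp_zero, mul_one]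
  have hexp : exp (-((m : ℝ) + 2) * A x) = exp (-A x) ^ (m + 2) := by
    rw [← exp_nat_mul]
    push_cast
    ring_nf
  rw [hy'', hK, ← hKeq, hexp, heq]
  ring

/-- Third-class reduction: if `K^{m+1}·K' = F(u, K(u))` and `y' = K(y)·e^{-A(x)}`,
then `(y')^m y'' + a(x)(y')^{m+1} = e^{-(m+2)A(x)}·F(y, y'·e^{A(x)})`. -/
theorem stmt_2 (m : ℕ) (a A K y : ℝ → ℝ) (F : ℝ × ℝ → ℝ)
    (ha : Continuous a)
    (hA : ∀ x, HasDerivAt A (a x) x)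
    (hKdiff : Differentiable ℝ K)
    (hKeq : ∀ u, K u ^ (m + 1) * deriv K u = F (u, K u))
    (hy : Differentiable ℝ y) (hy' : Differentiable ℝ (deriv y))
    (heq : ∀ x, deriv y x = K (y x) * Real.exp (-A x)) :
    ∀ x, (deriv y x) ^ m * deriv (deriv y) x + a x * (deriv y x) ^ (m + 1)
      = Real.exp (-((m : ℝ) + 2) * A x) * F (y x, deriv y x * Real.exp (A x)) :=
  stmt_2_general m a A K y F hA hKdiff hKeq hy heq
end

section
/- Let m be a natural number, a : ℝ → ℝ continuous with antiderivative A, and F : ℝ × ℝ → ℝ. Suppose K : ℝ → ℝ is differentiable and satisfies K(x)^m·K'(x) = F(x, K(x)) for all x. If y : ℝ → ℝ is twice differentiable and satisfies y'(x) = K(x)·exp(−A(y(x))) for all x, then y satisfies (y'(x))^m·y''(x) + a(y(x))·(y'(x))^{m+2} = exp(−(m+1)·A(y(x)))·F(x, y'(x)·exp(A(y(x)))) for all x. -/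
/-! Differentiating `y' = K·e^{-A(y)}` gives `y'' = K'·e^{-A(y)} - a(y)·y'^2`, so the left-hand
side collapses to `y'^m·K'·e^{-A(y)} = e^{-(m+1)A(y)}·K^m·K'`, and `K = y'·e^{A(y)}`. -/

open Real

theorem deriv_deriv_eq_of_deriv_eq_mul_exp_neg {A K y : ℝ → ℝ} {a x : ℝ}
    (hA : HasDerivAt A a (y x)) (hK : DifferentiableAt ℝ K x) (hy : DifferentiableAt ℝ y x)
    (heq : ∀ t, deriv y t = K t * exp (-A (y t))) :
    deriv (deriv y) x = deriv K x * exp (-A (y x)) - a * deriv y x ^ 2 := by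
  have hexp : HasDerivAt (fun t => exp (-A (y t))) (exp (-A (y x)) * -(a * deriv y x)) x :=
    ((hA.comp x hy.hasDerivAt).neg).exp
  have hy'' : HasDerivAt (deriv y) _ x :=
    (hK.hasDerivAt.mul hexp).congr_of_eventuallyEq (.of_forall heq)
  rw [hy''.deriv, heq x]
  ring

theorem stmt_3_general (m : ℕ) (a A K y : ℝ → ℝ) (F : ℝ × ℝ → ℝ)
    (hA : ∀ u, HasDerivAt A (a u) u)
    (hKdiff : Differentiable ℝ K)
    (hKeq : ∀ x, K x ^ m * deriv K x = F (x, K x))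
    (hy : Differentiable ℝ y)
    (heq : ∀ x, deriv y x = K x * Real.exp (-A (y x))) :
    ∀ x, (deriv y x) ^ m * deriv (deriv y) x + a (y x) * (deriv y x) ^ (m + 2)
      = Real.exp (-((m : ℝ) + 1) * A (y x)) * F (x, deriv y x * Real.exp (A (y x))) := by
  intro x
  have hy'' := deriv_deriv_eq_of_deriv_eq_mul_exp_neg (hA (y x)) (hKdiff x) (hy x) heq
  have hK : deriv y x * exp (A (y x)) = K x := by
    rw [heq x, mul_assoc, ← exp_add, neg_add_cancel, exp_zero, mul_one]
  have hexp : exp (-((m : ℝ) + 1) * A (y x)) = exp (-A (y x)) ^ (m + 1) := by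
    rw [← exp_nat_mul]
    push_cast
    ring_nf
  rw [hy'', hK, hexp, ← hKeq x, heq x]
  ring

/-- Fourth-class reduction: if `K^m·K' = F(x, K(x))` and `y' = K(x)·e^{-A(y)}`,
then `(y')^m y'' + a(y)(y')^{m+2} = e^{-(m+1)A(y)}·F(x, y'·e^{A(y)})`. -/
theorem stmt_3 (m : ℕ) (a A K y : ℝ → ℝ) (F : ℝ × ℝ → ℝ)
    (ha : Continuous a)
    (hA : ∀ u, HasDerivAt A (a u) u)
    (hKdiff : Differentiable ℝ K)
    (hKeq : ∀ x, K x ^ m * deriv K x = F (x, K x))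
    (hy : Differentiable ℝ y) (hy' : Differentiable ℝ (deriv y))
    (heq : ∀ x, deriv y x = K x * Real.exp (-A (y x))) :
    ∀ x, (deriv y x) ^ m * deriv (deriv y) x + a (y x) * (deriv y x) ^ (m + 2)
      = Real.exp (-((m : ℝ) + 1) * A (y x)) * F (x, deriv y x * Real.exp (A (y x))) :=
  stmt_3_general m a A K y F hA hKdiff hKeq hy heq
end

section
/- If K : ℝ → ℝ is differentiable and satisfies K(y)·K'(y) = K(y) + 2y for all y in an open interval I, then the function y ↦ (K(y) − 2y)²·(K(y) + y) is constant on I. -/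
/-! Differentiating, `d/dy [(K - 2y)²(K + y)] = 3 (K - 2y) (K K' - K - 2y)`, which vanishes along
solutions of the Abel equation; a function with zero derivative on an interval is constant. -/

theorem hasDerivAt_abel_first_integral {K : ℝ → ℝ} {k y : ℝ} (hK : HasDerivAt K k y) :
    HasDerivAt (fun y => (K y - 2 * y) ^ 2 * (K y + y))
      (3 * (K y - 2 * y) * (K y * k - (K y + 2 * y))) y := by
  have hprod := ((hK.fun_sub ((hasDerivAt_id' y).const_mul 2)).fun_pow 2).fun_mul
    (hK.fun_add (hasDerivAt_id' y))
  refine hprod.congr_deriv ?_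
  push_cast
  ring

/-- If `K` is differentiable and satisfies `K·K' = K + 2y` on an open interval `(p, q)`,
then `(K - 2y)²·(K + y)` is constant on that interval. -/
theorem stmt_5 (p q : ℝ) (K : ℝ → ℝ)
    (hK : ∀ y ∈ Set.Ioo p q, DifferentiableAt ℝ K y)
    (heq : ∀ y ∈ Set.Ioo p q, K y * deriv K y = K y + 2 * y) :
    ∃ c : ℝ, ∀ y ∈ Set.Ioo p q, (K y - 2 * y) ^ 2 * (K y + y) = c := by
  have hderiv : ∀ y ∈ Set.Ioo p q,
      HasDerivAt (fun y => (K y - 2 * y) ^ 2 * (K y + y)) 0 y := fun y hy => by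
    simpa [heq y hy] using hasDerivAt_abel_first_integral (hK y hy).hasDerivAt
  exact isOpen_Ioo.exists_is_const_of_deriv_eq_zero isPreconnected_Ioo
    (fun y hy => (hderiv y hy).differentiableAt.differentiableWithinAt)
    (fun y hy => (hderiv y hy).deriv)
end

section
/- Let F : ℝ → ℝ be continuous, n ≥ 1 a natural number, β ∈ ℝ, and H an antiderivative of F. If y : ℝ → ℝ is twice differentiable, nowhere zero, and satisfies y'(x) = (H(x)+A)·y(x) + (β/n)·y(x)^{n+1} for all x (for some constant A), then y satisfies y''(x) − (y'(x))²/y(x) = F(x)·y(x) + β·y'(x)·y(x)^n for all x. -/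
/-! Writing the equation as `y' = u y` with `u = H + A + (β/n) yⁿ`, one has
`y'' - y'²/y = u' y + u y' - u y' = u' y`, and `u' = F + β yⁿ⁻¹ y'`. -/

theorem deriv_deriv_sub_sq_div_eq_of_deriv_eq_mul {u y : ℝ → ℝ} {u' x : ℝ}
    (hyu : ∀ t, deriv y t = u t * y t) (hu : HasDerivAt u u' x)
    (hy : DifferentiableAt ℝ y x) (hy0 : y x ≠ 0) :
    deriv (deriv y) x - deriv y x ^ 2 / y x = u' * y x := by
  have hd : HasDerivAt (deriv y) (u' * y x + u x * deriv y x) x :=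
    (hu.mul hy.hasDerivAt).congr_of_eventuallyEq (Filter.Eventually.of_forall hyu)
  rw [hd.deriv, hyu x]
  field_simp
  ring

theorem stmt_7_general (F H y : ℝ → ℝ) (n : ℕ) (hn : 1 ≤ n) (β A : ℝ)
    (hH : ∀ x, HasDerivAt H (F x) x)
    (hy : Differentiable ℝ y)
    (hy0 : ∀ x, y x ≠ 0)
    (heq : ∀ x, deriv y x = (H x + A) * y x + (β / n) * y x ^ (n + 1)) :
    ∀ x, deriv (deriv y) x - (deriv y x) ^ 2 / y x
      = F x * y x + β * deriv y x * y x ^ n := by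
  intro x
  have hn0 : n ≠ 0 := by omega
  have hn0' : (n : ℝ) ≠ 0 := Nat.cast_ne_zero.mpr hn0
  have hyu : ∀ t, deriv y t = (H t + A + β / n * y t ^ n) * y t := fun t => by
    rw [heq]; ring
  have hu : HasDerivAt (fun t => H t + A + β / n * y t ^ n)
      (F x + β / n * (n * y x ^ (n - 1) * deriv y x)) x :=
    ((hH x).add_const A).add (((hy x).hasDerivAt.pow n).const_mul (β / n))
  rw [deriv_deriv_sub_sq_div_eq_of_deriv_eq_mul hyu hu (hy x) (hy0 x),
    ← pow_sub_one_mul hn0 (y x)]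
  field_simp

/-- Second-class example: if `y' = (H(x)+A)y + (β/n)y^{n+1}` with `H' = F` and `y` nowhere
zero, then `y'' - (y')²/y = F(x)·y + β·y'·y^n`. -/
theorem stmt_7 (F H y : ℝ → ℝ) (n : ℕ) (hn : 1 ≤ n) (β A : ℝ)
    (hF : Continuous F)
    (hH : ∀ x, HasDerivAt H (F x) x)
    (hy : Differentiable ℝ y) (hy' : Differentiable ℝ (deriv y))
    (hy0 : ∀ x, y x ≠ 0)
    (heq : ∀ x, deriv y x = (H x + A) * y x + (β / n) * y x ^ (n + 1)) :
    ∀ x, deriv (deriv y) x - (deriv y x) ^ 2 / y x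
      = F x * y x + β * deriv y x * y x ^ n :=
  stmt_7_general F H y n hn β A hH hy hy0 heq
end
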